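/- arXiv:0804.4621 — 3 statements merged into one kernel-verified Lean document; each statement's English description precedes it below -/
import Mathlib

section
/- Let μ, S : ℝ × ℝ^n → ℝ be smooth with μ > 0 everywhere, let V : ℝ^n → ℝ be smooth, ħ > 0, and set Ψ(t,x) = √(μ(t,x)) e^{iS(t,x)/ħ}. If (μ, S) satisfies the Madelung system ∂_t S + ½|∇S|² + V + (ħ²/8)(|∇ln μ|² − (2/μ)Δμ) = 0 and ∂_t μ + div(μ∇S) = 0, then Ψ satisfies the Schrödinger equation iħ ∂_t Ψ = −(ħ²/2)ΔΨ + VΨ. -/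
open MeasureTheory Real
noncomputable section

/-- Partial derivative in direction `k`. -/
def pd {n : ℕ} (f : (Fin n → ℝ) → ℝ) (k : Fin n) (x : Fin n → ℝ) : ℝ :=
  fderiv ℝ f x (Pi.single k 1)

/-- Gradient of a real-valued function on ℝ^n. -/
def grad {n : ℕ} (f : (Fin n → ℝ) → ℝ) (x : Fin n → ℝ) : Fin n → ℝ :=
  fun k => pd f k x

/-- Laplacian. -/
def lap {n : ℕ} (f : (Fin n → ℝ) → ℝ) (x : Fin n → ℝ) : ℝ :=
  ∑ k, pd (pd f k) k x

/-- Divergence of a vector field. -/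
def dvg {n : ℕ} (v : (Fin n → ℝ) → (Fin n → ℝ)) (x : Fin n → ℝ) : ℝ :=
  ∑ k, pd (fun y => v y k) k x

/-- Complex partial derivative in direction `k`. -/
def pdC {n : ℕ} (f : (Fin n → ℝ) → ℂ) (k : Fin n) (x : Fin n → ℝ) : ℂ :=
  fderiv ℝ f x (Pi.single k 1)

/-- Complex Laplacian. -/
def lapC {n : ℕ} (f : (Fin n → ℝ) → ℂ) (x : Fin n → ℝ) : ℂ :=
  ∑ k, fderiv ℝ (fun y => pdC f k y) x (Pi.single k 1)

/-- Time derivative of a (possibly vector-valued) function of (t,x). -/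
def pdt {E : Type*} [NormedAddCommGroup E] [NormedSpace ℝ E]
    {n : ℕ} (f : ℝ × (Fin n → ℝ) → E) (t : ℝ) (x : Fin n → ℝ) : E :=
  deriv (fun s => f (s, x)) t

section helpers
variable {n : ℕ}

lemma contDiff_pd {f : (Fin n → ℝ) → ℝ} (hf : ContDiff ℝ (⊤ : ℕ∞) f) (k : Fin n) :
    ContDiff ℝ (⊤ : ℕ∞) (pd f k) := by
  unfold pd
  exact (hf.fderiv_right (by simp)).clm_apply contDiff_const

lemma pd_mul {f g : (Fin n → ℝ) → ℝ} (hf : ContDiff ℝ (⊤ : ℕ∞) f) (hg : ContDiff ℝ (⊤ : ℕ∞) g)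
    (k : Fin n) (x : Fin n → ℝ) :
    pd (fun y => f y * g y) k x = pd f k x * g x + f x * pd g k x := by
  unfold pd
  rw [fderiv_fun_mul (hf.differentiable (by simp) x) (hg.differentiable (by simp) x)]
  simp; ring

lemma pd_const_mul {f : (Fin n → ℝ) → ℝ} (hf : ContDiff ℝ (⊤ : ℕ∞) f) (c : ℝ)
    (k : Fin n) (x : Fin n → ℝ) :
    pd (fun y => c * f y) k x = c * pd f k x := by
  unfold pd
  rw [fderiv_const_mul (hf.differentiable (by simp) x)]
  simp

lemma pd_log {f : (Fin n → ℝ) → ℝ} (hf : ContDiff ℝ (⊤ : ℕ∞) f) (k : Fin n) (x : Fin n → ℝ)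
    (hx : f x ≠ 0) :
    pd (fun y => Real.log (f y)) k x = pd f k x / f x := by
  unfold pd
  rw [((hf.differentiable (by simp) x).hasFDerivAt.log hx).fderiv]
  simp [div_eq_inv_mul]

/-- pdC of `(u : ℝ) + c * (v : ℝ)`. -/
lemma pdC_combo {u v : (Fin n → ℝ) → ℝ} (hu : ContDiff ℝ (⊤ : ℕ∞) u) (hv : ContDiff ℝ (⊤ : ℕ∞) v)
    (c : ℂ) (k : Fin n) (x : Fin n → ℝ) :
    pdC (fun y => ((u y : ℝ) : ℂ) + c * ((v y : ℝ) : ℂ)) k x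
      = ((pd u k x : ℝ) : ℂ) + c * ((pd v k x : ℝ) : ℂ) := by
  unfold pdC pd
  have hU : HasFDerivAt (fun y => ((u y : ℝ) : ℂ))
      (Complex.ofRealCLM.comp (fderiv ℝ u x)) x :=
    Complex.ofRealCLM.hasFDerivAt.comp x (hu.differentiable (by simp) x).hasFDerivAt
  have hV : HasFDerivAt (fun y => c * ((v y : ℝ) : ℂ))
      (c • Complex.ofRealCLM.comp (fderiv ℝ v x)) x :=
    (Complex.ofRealCLM.hasFDerivAt.comp x (hv.differentiable (by simp) x).hasFDerivAt).const_mul c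
  rw [(hU.fun_add hV).fderiv]
  simp [smul_eq_mul]

lemma pdC_cexp {w : (Fin n → ℝ) → ℂ} (hw : Differentiable ℝ w) (k : Fin n) (x : Fin n → ℝ) :
    pdC (fun y => Complex.exp (w y)) k x = Complex.exp (w x) * pdC w k x := by
  unfold pdC
  rw [((hw x).hasFDerivAt.cexp).fderiv]
  simp [smul_eq_mul]

lemma contDiff_combo {u v : (Fin n → ℝ) → ℝ} (hu : ContDiff ℝ (⊤ : ℕ∞) u) (hv : ContDiff ℝ (⊤ : ℕ∞) v)
    (c : ℂ) : ContDiff ℝ (⊤ : ℕ∞) (fun y => ((u y : ℝ) : ℂ) + c * ((v y : ℝ) : ℂ)) :=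
  (Complex.ofRealCLM.contDiff.comp hu).add
    (contDiff_const.mul (Complex.ofRealCLM.contDiff.comp hv))

lemma lapC_term {u v : (Fin n → ℝ) → ℝ} (hu : ContDiff ℝ (⊤ : ℕ∞) u) (hv : ContDiff ℝ (⊤ : ℕ∞) v)
    (c : ℂ) (k : Fin n) (x : Fin n → ℝ) :
    fderiv ℝ (fun y => pdC (fun z =>
        Complex.exp (((u z : ℝ) : ℂ) + c * ((v z : ℝ) : ℂ))) k y) x (Pi.single k 1)
      = Complex.exp (((u x : ℝ) : ℂ) + c * ((v x : ℝ) : ℂ)) *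
        ( (((pd (pd u k) k x : ℝ) : ℂ) + c * ((pd (pd v k) k x : ℝ) : ℂ))
          + (((pd u k x : ℝ) : ℂ) + c * ((pd v k x : ℝ) : ℂ))^2 ) := by
  set w : (Fin n → ℝ) → ℂ := fun y => ((u y : ℝ) : ℂ) + c * ((v y : ℝ) : ℂ) with hw
  have hwC : ContDiff ℝ (⊤ : ℕ∞) w := contDiff_combo hu hv c
  have hF : ContDiff ℝ (⊤ : ℕ∞) (fun y => ((pd u k y : ℝ) : ℂ) + c * ((pd v k y : ℝ) : ℂ)) :=
    contDiff_combo (contDiff_pd hu k) (contDiff_pd hv k) c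
  have hfun : (fun y => pdC (fun z => Complex.exp (w z)) k y)
      = fun y => Complex.exp (w y) * (((pd u k y : ℝ) : ℂ) + c * ((pd v k y : ℝ) : ℂ)) := by
    funext y
    rw [pdC_cexp (hwC.differentiable (by simp)) k y, hw, pdC_combo hu hv c k y]
  rw [hfun, fderiv_fun_mul ((hwC.differentiable (by simp) x).cexp)
      (hF.differentiable (by simp) x)]
  have h2 : (fderiv ℝ (fun y => ((pd u k y : ℝ) : ℂ) + c * ((pd v k y : ℝ) : ℂ)) x)
      (Pi.single k 1)
      = ((pd (pd u k) k x : ℝ) : ℂ) + c * ((pd (pd v k) k x : ℝ) : ℂ) :=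
    pdC_combo (contDiff_pd hu k) (contDiff_pd hv k) c k x
  have h3 : (fderiv ℝ (fun y => Complex.exp (w y)) x) (Pi.single k 1)
      = Complex.exp (w x) * (((pd u k x : ℝ) : ℂ) + c * ((pd v k x : ℝ) : ℂ)) := by
    have h := pdC_cexp (w := w) (hwC.differentiable (by simp)) k x
    rw [pdC] at h
    rw [h, hw, pdC_combo hu hv c k x]
  simp only [ContinuousLinearMap.add_apply, ContinuousLinearMap.smul_apply, h2, h3,
    smul_eq_mul]
  ring

end helpers

theorem stmt_6 (n : ℕ) (μ S : ℝ × (Fin n → ℝ) → ℝ) (V : (Fin n → ℝ) → ℝ)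
    (Ψ : ℝ × (Fin n → ℝ) → ℂ) (hbar : ℝ)
    (hμ : ContDiff ℝ (⊤ : ℕ∞) μ) (hS : ContDiff ℝ (⊤ : ℕ∞) S) (hV : ContDiff ℝ (⊤ : ℕ∞) V)
    (hμpos : ∀ t x, 0 < μ (t, x)) (hbarpos : 0 < hbar)
    (hΨ : ∀ t x, Ψ (t, x) =
      (Real.sqrt (μ (t, x)) : ℂ) * Complex.exp (Complex.I * (S (t, x) : ℂ) / (hbar : ℂ)))
    (hHJ : ∀ t x,
      pdt S t x + (1/2) * (∑ k, (grad (fun y => S (t, y)) x k)^2) + V x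
        + (hbar^2/8) * ((∑ k, (grad (fun y => Real.log (μ (t, y))) x k)^2)
            - (2 / μ (t, x)) * lap (fun y => μ (t, y)) x) = 0)
    (hcont : ∀ t x,
      pdt μ t x + dvg (fun y k => μ (t, y) * grad (fun z => S (t, z)) y k) x = 0) :
    ∀ t x, Complex.I * (hbar : ℂ) * pdt Ψ t x
      = -((hbar : ℂ)^2/2) * lapC (fun y => Ψ (t, y)) x + (V x : ℂ) * Ψ (t, x) := by
  intro t x
  have hb : hbar ≠ 0 := ne_of_gt hbarpos
  have ha : μ (t, x) ≠ 0 := (hμpos t x).ne'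
  -- smoothness of slices
  have hf : ContDiff ℝ (⊤ : ℕ∞) (fun y => μ (t, y)) := hμ.comp (contDiff_const.prodMk contDiff_id)
  have hg : ContDiff ℝ (⊤ : ℕ∞) (fun y => S (t, y)) := hS.comp (contDiff_const.prodMk contDiff_id)
  have hlog : ContDiff ℝ (⊤ : ℕ∞) (fun y => Real.log (μ (t, y))) :=
    hf.log (fun y => (hμpos t y).ne')
  have hu : ContDiff ℝ (⊤ : ℕ∞) (fun y => (1/2 : ℝ) * Real.log (μ (t, y))) := contDiff_const.mul hlog
  have hv : ContDiff ℝ (⊤ : ℕ∞) (fun y => (1/hbar : ℝ) * S (t, y)) := contDiff_const.mul hg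
  -- Ψ as an exponential
  have hΨw : ∀ s y, Ψ (s, y)
      = Complex.exp ((((1/2 : ℝ) * Real.log (μ (s, y)) : ℝ) : ℂ)
          + Complex.I * (((1/hbar : ℝ) * S (s, y) : ℝ) : ℂ)) := by
    intro s y
    rw [hΨ s y]
    have h0 : (0:ℝ) < μ (s, y) := hμpos s y
    have hsq : Real.sqrt (μ (s, y)) = Real.exp ((1/2 : ℝ) * Real.log (μ (s, y))) := by
      rw [← Real.exp_log (Real.sqrt_pos.mpr h0), Real.log_sqrt h0.le]
      congr 1; ring
    rw [hsq, Complex.ofReal_exp, ← Complex.exp_add]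
    congr 1
    push_cast
    field_simp
  -- time derivative
  have hμs : ContDiff ℝ (⊤ : ℕ∞) (fun s => μ (s, x)) := hμ.comp (contDiff_id.prodMk contDiff_const)
  have hSs : ContDiff ℝ (⊤ : ℕ∞) (fun s => S (s, x)) := hS.comp (contDiff_id.prodMk contDiff_const)
  have hd1 : HasDerivAt (fun s => μ (s, x)) (pdt μ t x) t :=
    (hμs.differentiable (by simp) t).hasDerivAt
  have hd2 : HasDerivAt (fun s => S (s, x)) (pdt S t x) t :=
    (hSs.differentiable (by simp) t).hasDerivAt
  have hdu : HasDerivAt (fun s => (1/2 : ℝ) * Real.log (μ (s, x)))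
      ((1/2 : ℝ) * (pdt μ t x / μ (t, x))) t :=
    HasDerivAt.const_mul (1/2 : ℝ) (hd1.log ha)
  have hdv : HasDerivAt (fun s => (1/hbar : ℝ) * S (s, x)) ((1/hbar : ℝ) * pdt S t x) t :=
    HasDerivAt.const_mul (1/hbar : ℝ) hd2
  have hdW : HasDerivAt (fun s => (((1/2 : ℝ) * Real.log (μ (s, x)) : ℝ) : ℂ)
        + Complex.I * (((1/hbar : ℝ) * S (s, x) : ℝ) : ℂ))
      ((((1/2 : ℝ) * (pdt μ t x / μ (t, x)) : ℝ) : ℂ)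
        + Complex.I * ((((1/hbar : ℝ) * pdt S t x) : ℝ) : ℂ)) t :=
    (hdu.ofReal_comp).add (HasDerivAt.const_mul Complex.I (hdv.ofReal_comp))
  have hdΨ : pdt Ψ t x
      = Complex.exp ((((1/2 : ℝ) * Real.log (μ (t, x)) : ℝ) : ℂ)
          + Complex.I * (((1/hbar : ℝ) * S (t, x) : ℝ) : ℂ))
        * ((((1/2 : ℝ) * (pdt μ t x / μ (t, x)) : ℝ) : ℂ)
          + Complex.I * ((((1/hbar : ℝ) * pdt S t x) : ℝ) : ℂ)) := by
    have hfun : (fun s => Ψ (s, x))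
        = fun s => Complex.exp ((((1/2 : ℝ) * Real.log (μ (s, x)) : ℝ) : ℂ)
            + Complex.I * (((1/hbar : ℝ) * S (s, x) : ℝ) : ℂ)) :=
      funext fun s => hΨw s x
    show deriv (fun s => Ψ (s, x)) t = _
    rw [hfun]
    exact hdW.cexp.deriv
  -- Laplacian
  have hlap : lapC (fun y => Ψ (t, y)) x
      = ∑ k, Complex.exp ((((1/2 : ℝ) * Real.log (μ (t, x)) : ℝ) : ℂ)
          + Complex.I * (((1/hbar : ℝ) * S (t, x) : ℝ) : ℂ)) *
        ( (((pd (pd (fun y => (1/2 : ℝ) * Real.log (μ (t, y))) k) k x : ℝ) : ℂ)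
            + Complex.I * ((pd (pd (fun y => (1/hbar : ℝ) * S (t, y)) k) k x : ℝ) : ℂ))
          + (((pd (fun y => (1/2 : ℝ) * Real.log (μ (t, y))) k x : ℝ) : ℂ)
            + Complex.I * ((pd (fun y => (1/hbar : ℝ) * S (t, y)) k x : ℝ) : ℂ))^2 ) := by
    have hfunx : (fun y => Ψ (t, y))
        = fun y => Complex.exp ((((1/2 : ℝ) * Real.log (μ (t, y)) : ℝ) : ℂ)
            + Complex.I * (((1/hbar : ℝ) * S (t, y) : ℝ) : ℂ)) :=
      funext fun y => hΨw t y
    rw [hfunx]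
    exact Finset.sum_congr rfl fun k _ => lapC_term hu hv Complex.I k x
  -- first derivative facts
  have hUk : ∀ (k : Fin n) (y : Fin n → ℝ),
      pd (fun y' => (1/2 : ℝ) * Real.log (μ (t, y'))) k y
        = (1/2) * (pd (fun y' => μ (t, y')) k y / μ (t, y)) := by
    intro k y
    rw [pd_const_mul hlog (1/2 : ℝ) k y, pd_log hf k y (hμpos t y).ne']
  have hVk : ∀ (k : Fin n) (y : Fin n → ℝ),
      pd (fun y' => (1/hbar : ℝ) * S (t, y')) k y
        = (1/hbar) * pd (fun y' => S (t, y')) k y :=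
    fun k y => pd_const_mul hg (1/hbar : ℝ) k y
  -- second derivative facts
  have hVkk : ∀ k : Fin n, pd (pd (fun y' => (1/hbar : ℝ) * S (t, y')) k) k x
      = (1/hbar) * pd (pd (fun y' => S (t, y')) k) k x := by
    intro k
    have h1 : (pd (fun y' => (1/hbar : ℝ) * S (t, y')) k)
        = fun y => (1/hbar) * pd (fun y' => S (t, y')) k y := funext (hVk k)
    rw [h1, pd_const_mul (contDiff_pd hg k) (1/hbar : ℝ) k x]
  have hUkk : ∀ k : Fin n, pd (pd (fun y' => (1/2 : ℝ) * Real.log (μ (t, y'))) k) k x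
      = ((1/2) * pd (pd (fun y' => μ (t, y')) k) k x
          - pd (fun y' => μ (t, y')) k x
            * ((1/2) * (pd (fun y' => μ (t, y')) k x / μ (t, x)))) / μ (t, x) := by
    intro k
    have h1 : (fun y => μ (t, y) * pd (fun y' => (1/2 : ℝ) * Real.log (μ (t, y'))) k y)
        = fun y => (1/2 : ℝ) * pd (fun y' => μ (t, y')) k y := by
      funext y
      rw [hUk k y]
      field_simp [(hμpos t y).ne']
      try ring
    have h2 : pd (fun y => μ (t, y) * pd (fun y' => (1/2 : ℝ) * Real.log (μ (t, y'))) k y) k x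
        = pd (fun y' => μ (t, y')) k x * pd (fun y' => (1/2 : ℝ) * Real.log (μ (t, y'))) k x
          + μ (t, x) * pd (pd (fun y' => (1/2 : ℝ) * Real.log (μ (t, y'))) k) k x :=
      pd_mul hf (contDiff_pd hu k) k x
    rw [h1, pd_const_mul (contDiff_pd hf k) (1/2 : ℝ) k x, hUk k x] at h2
    field_simp at h2 ⊢
    linarith
  -- hypotheses in atomic form
  have HJ : pdt S t x + (1/2) * (∑ k, (pd (fun y => S (t, y)) k x)^2) + V x
      + (hbar^2/8) * ((∑ k, (pd (fun y => μ (t, y)) k x)^2) / (μ (t, x))^2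
          - (2 / μ (t, x)) * (∑ k, pd (pd (fun y => μ (t, y)) k) k x)) = 0 := by
    have h := hHJ t x
    simp only [grad, lap] at h
    rw [show (∑ k, (pd (fun y => Real.log (μ (t, y))) k x)^2)
        = (∑ k, (pd (fun y => μ (t, y)) k x)^2) / (μ (t, x))^2 from by
      rw [Finset.sum_div]
      exact Finset.sum_congr rfl fun k _ => by rw [pd_log hf k x ha, div_pow]] at h
    exact h
  have CT : pdt μ t x + ((∑ k, pd (fun y => μ (t, y)) k x * pd (fun y => S (t, y)) k x)
      + μ (t, x) * (∑ k, pd (pd (fun y => S (t, y)) k) k x)) = 0 := by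
    have h := hcont t x
    simp only [dvg, grad] at h
    rw [show (∑ k, pd (fun y => μ (t, y) * pd (fun z => S (t, z)) k y) k x)
        = ∑ k, (pd (fun y => μ (t, y)) k x * pd (fun y => S (t, y)) k x
            + μ (t, x) * pd (pd (fun y => S (t, y)) k) k x) from
      Finset.sum_congr rfl fun k _ => pd_mul hf (contDiff_pd hg k) k x,
      Finset.sum_add_distrib, ← Finset.mul_sum] at h
    exact h
  field_simp at HJ
  -- assemble
  rw [hdΨ, hlap, ← Finset.mul_sum, hΨw t x]
  have hterm : ∀ k ∈ (Finset.univ : Finset (Fin n)),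
      ((((pd (pd (fun y => (1/2 : ℝ) * Real.log (μ (t, y))) k) k x : ℝ) : ℂ)
          + Complex.I * ((pd (pd (fun y => (1/hbar : ℝ) * S (t, y)) k) k x : ℝ) : ℂ))
        + (((pd (fun y => (1/2 : ℝ) * Real.log (μ (t, y))) k x : ℝ) : ℂ)
          + Complex.I * ((pd (fun y => (1/hbar : ℝ) * S (t, y)) k x : ℝ) : ℂ))^2)
      = ((pd (pd (fun y => (1/2 : ℝ) * Real.log (μ (t, y))) k) k x
            + (pd (fun y => (1/2 : ℝ) * Real.log (μ (t, y))) k x)^2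
            - (pd (fun y => (1/hbar : ℝ) * S (t, y)) k x)^2 : ℝ) : ℂ)
        + Complex.I * ((pd (pd (fun y => (1/hbar : ℝ) * S (t, y)) k) k x
            + 2 * pd (fun y => (1/2 : ℝ) * Real.log (μ (t, y))) k x
              * pd (fun y => (1/hbar : ℝ) * S (t, y)) k x : ℝ) : ℂ) := by
    intro k _
    push_cast
    linear_combination (((pd (fun y => (1/hbar : ℝ) * S (t, y)) k x : ℝ) : ℂ))^2
      * Complex.I_sq
  have hsum : (∑ k, ((((pd (pd (fun y => (1/2 : ℝ) * Real.log (μ (t, y))) k) k x : ℝ) : ℂ)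
          + Complex.I * ((pd (pd (fun y => (1/hbar : ℝ) * S (t, y)) k) k x : ℝ) : ℂ))
        + (((pd (fun y => (1/2 : ℝ) * Real.log (μ (t, y))) k x : ℝ) : ℂ)
          + Complex.I * ((pd (fun y => (1/hbar : ℝ) * S (t, y)) k x : ℝ) : ℂ))^2))
      = ((∑ k, (pd (pd (fun y => (1/2 : ℝ) * Real.log (μ (t, y))) k) k x
            + (pd (fun y => (1/2 : ℝ) * Real.log (μ (t, y))) k x)^2
            - (pd (fun y => (1/hbar : ℝ) * S (t, y)) k x)^2) : ℝ) : ℂ)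
        + Complex.I * ((∑ k, (pd (pd (fun y => (1/hbar : ℝ) * S (t, y)) k) k x
            + 2 * pd (fun y => (1/2 : ℝ) * Real.log (μ (t, y))) k x
              * pd (fun y => (1/hbar : ℝ) * S (t, y)) k x) : ℝ) : ℂ) := by
    rw [Finset.sum_congr rfl hterm, Finset.sum_add_distrib, ← Complex.ofReal_sum,
      ← Finset.mul_sum, ← Complex.ofReal_sum]
  have hP2 : ∀ k ∈ (Finset.univ : Finset (Fin n)),
      pd (pd (fun y => (1/2 : ℝ) * Real.log (μ (t, y))) k) k x
        + (pd (fun y => (1/2 : ℝ) * Real.log (μ (t, y))) k x)^2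
        - (pd (fun y => (1/hbar : ℝ) * S (t, y)) k x)^2
      = pd (pd (fun y => μ (t, y)) k) k x / (2 * μ (t, x))
        - (pd (fun y => μ (t, y)) k x)^2 / (4 * μ (t, x)^2)
        - (pd (fun y => S (t, y)) k x)^2 / hbar^2 := by
    intro k _
    rw [hUkk k, hUk k x, hVk k x]
    ring
  have hQ2 : ∀ k ∈ (Finset.univ : Finset (Fin n)),
      pd (pd (fun y => (1/hbar : ℝ) * S (t, y)) k) k x
        + 2 * pd (fun y => (1/2 : ℝ) * Real.log (μ (t, y))) k x
          * pd (fun y => (1/hbar : ℝ) * S (t, y)) k x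
      = pd (pd (fun y => S (t, y)) k) k x / hbar
        + pd (fun y => μ (t, y)) k x * pd (fun y => S (t, y)) k x / (μ (t, x) * hbar) := by
    intro k _
    rw [hVkk k, hUk k x, hVk k x]
    ring
  have key : Complex.I * (hbar : ℂ)
      * ((((1/2 : ℝ) * (pdt μ t x / μ (t, x)) : ℝ) : ℂ)
          + Complex.I * ((((1/hbar : ℝ) * pdt S t x) : ℝ) : ℂ))
      = -((hbar : ℂ)^2/2) *
        (∑ k, ((((pd (pd (fun y => (1/2 : ℝ) * Real.log (μ (t, y))) k) k x : ℝ) : ℂ)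
            + Complex.I * ((pd (pd (fun y => (1/hbar : ℝ) * S (t, y)) k) k x : ℝ) : ℂ))
          + (((pd (fun y => (1/2 : ℝ) * Real.log (μ (t, y))) k x : ℝ) : ℂ)
            + Complex.I * ((pd (fun y => (1/hbar : ℝ) * S (t, y)) k x : ℝ) : ℂ))^2))
        + ((V x : ℝ) : ℂ) := by
    rw [hsum]
    rw [show -((hbar : ℂ)^2/2) = (((-(hbar^2/2)) : ℝ) : ℂ) from by push_cast; ring]
    rw [Complex.ext_iff]
    constructor
    · simp only [Complex.add_re, Complex.mul_re, Complex.mul_im, Complex.I_re, Complex.I_im,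
        Complex.ofReal_re, Complex.ofReal_im, Complex.add_im, zero_mul, mul_zero, one_mul,
        mul_one, zero_add, add_zero, sub_zero, zero_sub, neg_zero, neg_neg]
      rw [Finset.sum_congr rfl hP2, Finset.sum_sub_distrib, Finset.sum_sub_distrib,
        ← Finset.sum_div, ← Finset.sum_div, ← Finset.sum_div]
      field_simp
      linear_combination (-1) * HJ
    · simp only [Complex.add_re, Complex.mul_re, Complex.mul_im, Complex.I_re, Complex.I_im,
        Complex.ofReal_re, Complex.ofReal_im, Complex.add_im, zero_mul, mul_zero, one_mul,
        mul_one, zero_add, add_zero, sub_zero, zero_sub, neg_zero, neg_neg]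
      rw [Finset.sum_congr rfl hQ2, Finset.sum_add_distrib, ← Finset.sum_div, ← Finset.sum_div]
      field_simp
      linear_combination CT
  linear_combination (Complex.exp ((((1/2 : ℝ) * Real.log (μ (t, x)) : ℝ) : ℂ)
      + Complex.I * (((1/hbar : ℝ) * S (t, x) : ℝ) : ℂ))) * key
end
end

section
/- Energy identity for the Madelung transform: let μ : 𝕋^n → ℝ be smooth and strictly positive with ∫μ = 1, S : 𝕋^n → ℝ smooth, V : 𝕋^n → ℝ smooth, ħ > 0, and Ψ = √μ e^{iS/ħ}. Then (ħ²/2)∫|∇Ψ|² dx + ∫V|Ψ|² dx = ½∫|∇S|² μ dx + ∫V μ dx + (ħ²/8)∫|∇ln μ|² μ dx. In particular H_S(Ψ) = H_F(−div(μ∇S)), where H_F is the Wasserstein Hamiltonian with potential F(μ) = ∫V dμ + (ħ²/8)I(μ). -/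
open MeasureTheory Real
noncomputable section

theorem stmt_11 (n : ℕ) (μ S V : (Fin n → ℝ) → ℝ) (Ψ : (Fin n → ℝ) → ℂ) (hbar : ℝ)
    (hμ : ContDiff ℝ (⊤ : ℕ∞) μ) (hS : ContDiff ℝ (⊤ : ℕ∞) S) (hV : ContDiff ℝ (⊤ : ℕ∞) V)
    (hμpos : ∀ x, 0 < μ x) (hbarpos : 0 < hbar)
    (hμper : ∀ x k, μ (x + Pi.single k 1) = μ x)
    (hSper : ∀ x k, S (x + Pi.single k 1) = S x)
    (hVper : ∀ x k, V (x + Pi.single k 1) = V x)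
    (hnorm : (∫ x in Set.Icc (0 : Fin n → ℝ) 1, μ x) = 1)
    (hΨ : ∀ x, Ψ x = (Real.sqrt (μ x) : ℂ) * Complex.exp (Complex.I * (S x : ℂ) / (hbar : ℂ))) :
    (hbar^2/2) * (∫ x in Set.Icc (0 : Fin n → ℝ) 1, ∑ k, Complex.normSq (pdC Ψ k x))
      + (∫ x in Set.Icc (0 : Fin n → ℝ) 1, V x * Complex.normSq (Ψ x))
    = (1/2) * (∫ x in Set.Icc (0 : Fin n → ℝ) 1, (∑ k, (grad S x k)^2) * μ x)
      + (∫ x in Set.Icc (0 : Fin n → ℝ) 1, V x * μ x)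
      + (hbar^2/8) * (∫ x in Set.Icc (0 : Fin n → ℝ) 1,
          (∑ k, (grad (fun y => Real.log (μ y)) x k)^2) * μ x) := by
  have hΨfun : Ψ = fun y => (Real.sqrt (μ y) : ℂ) * Complex.exp (Complex.I * (S y : ℂ) / (hbar : ℂ)) :=
    funext hΨ
  -- pointwise: |Ψ|² = μ
  have hΨsq : ∀ x, Complex.normSq (Ψ x) = μ x := by
    intro x
    have hEq : Complex.I * (S x :ℂ)/(hbar:ℂ) = ((S x / hbar : ℝ) : ℂ) * Complex.I := by
      push_cast; ring
    have hE1 : Complex.normSq (Complex.exp (((S x / hbar : ℝ):ℂ) * Complex.I)) = 1 := by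
      rw [Complex.normSq_eq_norm_sq, Complex.norm_exp_ofReal_mul_I, one_pow]
    rw [hΨ x, Complex.normSq_mul, hEq, hE1, mul_one, Complex.normSq_ofReal,
      Real.mul_self_sqrt (hμpos x).le]
  -- pointwise: |∂ₖΨ|²
  have key : ∀ x k, Complex.normSq (pdC Ψ k x)
      = (1/(2*Real.sqrt (μ x)) * pd μ k x)^2 + (Real.sqrt (μ x) * pd S k x / hbar)^2 := by
    intro x k
    have hne : μ x ≠ 0 := (hμpos x).ne'
    have hμd : HasFDerivAt μ (fderiv ℝ μ x) x := (hμ.differentiable (by simp) x).hasFDerivAt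
    have hSd : HasFDerivAt S (fderiv ℝ S x) x := (hS.differentiable (by simp) x).hasFDerivAt
    have hρ : HasFDerivAt (fun y => (Real.sqrt (μ y) : ℂ))
        (Complex.ofRealCLM.comp ((1/(2*Real.sqrt (μ x))) • fderiv ℝ μ x)) x :=
      Complex.ofRealCLM.hasFDerivAt.comp x (hμd.sqrt hne)
    have hg : HasFDerivAt (fun y => Complex.I * (S y : ℂ) / (hbar : ℂ))
        ((Complex.I / (hbar:ℂ)) • (Complex.ofRealCLM.comp (fderiv ℝ S x))) x := by
      have h1 : HasFDerivAt (fun y => ((S y : ℝ) : ℂ)) (Complex.ofRealCLM.comp (fderiv ℝ S x)) x :=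
        Complex.ofRealCLM.hasFDerivAt.comp x hSd
      have h2 := h1.const_mul (Complex.I / (hbar:ℂ))
      have h3 : (fun y => Complex.I / (hbar:ℂ) * ((S y : ℝ) : ℂ))
          = fun y => Complex.I * (S y : ℂ) / (hbar : ℂ) := by
        funext y; ring
      rwa [h3] at h2
    have hE : HasFDerivAt (fun y => Complex.exp (Complex.I * (S y:ℂ)/(hbar:ℂ)))
        ((Complex.exp (Complex.I * (S x:ℂ)/(hbar:ℂ))) •
          ((Complex.I / (hbar:ℂ)) • (Complex.ofRealCLM.comp (fderiv ℝ S x)))) x :=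
      (Complex.hasDerivAt_exp _).comp_hasFDerivAt x hg
    have hΨd := hρ.mul hE
    change HasFDerivAt (fun y => (Real.sqrt (μ y) : ℂ) * Complex.exp (Complex.I * (S y : ℂ) / (hbar : ℂ))) _ x at hΨd
    rw [← hΨfun] at hΨd
    rw [pdC, hΨd.fderiv]
    set a := fderiv ℝ μ x (Pi.single k 1) with ha
    set s := fderiv ℝ S x (Pi.single k 1) with hs
    have hz : (((Real.sqrt (μ x)):ℂ) • ((Complex.exp (Complex.I * (S x:ℂ)/(hbar:ℂ))) •
          ((Complex.I / (hbar:ℂ)) • (Complex.ofRealCLM.comp (fderiv ℝ S x))))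
        + (Complex.exp (Complex.I * (S x:ℂ)/(hbar:ℂ))) •
          (Complex.ofRealCLM.comp ((1/(2*Real.sqrt (μ x))) • fderiv ℝ μ x))) (Pi.single k 1)
        = Complex.exp (Complex.I * (S x:ℂ)/(hbar:ℂ)) *
          (((1/(2*Real.sqrt (μ x)) * a : ℝ) : ℂ) + ((Real.sqrt (μ x) * s / hbar : ℝ) : ℂ) * Complex.I) := by
      simp only [ContinuousLinearMap.add_apply, ContinuousLinearMap.smul_apply,
        ContinuousLinearMap.coe_smul', Pi.smul_apply, ContinuousLinearMap.coe_comp',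
        Function.comp_apply, Complex.ofRealCLM_apply, smul_eq_mul, ← ha, ← hs]
      push_cast
      ring
    rw [hz, Complex.normSq_mul, Complex.normSq_add_mul_I]
    have habs : Complex.normSq (Complex.exp (Complex.I * (S x:ℂ)/(hbar:ℂ))) = 1 := by
      have hEq : Complex.I * (S x :ℂ)/(hbar:ℂ) = ((S x / hbar : ℝ) : ℂ) * Complex.I := by
        push_cast; ring
      rw [hEq, Complex.normSq_eq_norm_sq, Complex.norm_exp_ofReal_mul_I, one_pow]
    rw [habs, one_mul, pd, pd, ← ha, ← hs]
  -- gradient of log μ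
  have hlog : ∀ x k, grad (fun y => Real.log (μ y)) x k = pd μ k x / μ x := by
    intro x k
    have hμd : HasFDerivAt μ (fderiv ℝ μ x) x := (hμ.differentiable (by simp) x).hasFDerivAt
    have h := (hμd.log (hμpos x).ne').fderiv
    rw [grad, pd, h]
    simp [pd, inv_mul_eq_div]
  -- pointwise gradient-energy identity
  have hgradpt : ∀ x, hbar^2/2 * (∑ k, Complex.normSq (pdC Ψ k x))
      = 1/2 * ((∑ k, (grad S x k)^2) * μ x)
        + hbar^2/8 * ((∑ k, (grad (fun y => Real.log (μ y)) x k)^2) * μ x) := by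
    intro x
    rw [Finset.mul_sum, Finset.sum_mul, Finset.sum_mul, Finset.mul_sum, Finset.mul_sum,
      ← Finset.sum_add_distrib]
    refine Finset.sum_congr rfl fun k _ => ?_
    rw [key x k, hlog x k]
    have hm : (0:ℝ) < μ x := hμpos x
    have hsq : Real.sqrt (μ x) ^ 2 = μ x := Real.sq_sqrt hm.le
    have hsne : Real.sqrt (μ x) ≠ 0 := (Real.sqrt_pos.mpr hm).ne'
    have : grad S x k = pd S k x := rfl
    rw [this]
    have e1 : (Real.sqrt (μ x) * pd S k x / hbar)^2 = μ x * (pd S k x)^2 / hbar^2 := by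
      rw [div_pow, mul_pow, hsq]
    have e2 : (1/(2*Real.sqrt (μ x)) * pd μ k x)^2 = (pd μ k x)^2/(4*μ x) := by
      rw [mul_pow, div_pow, mul_pow, hsq]; ring
    rw [e1, e2]
    have hb : hbar ≠ 0 := hbarpos.ne'
    have hmne : μ x ≠ 0 := hm.ne'
    field_simp
    ring
  -- continuity / integrability
  have hpdS : ∀ k : Fin n, Continuous fun x => pd S k x := by
    intro k
    exact (hS.continuous_fderiv_apply (by simp)).comp (continuous_id.prodMk continuous_const)
  have hlogC : ContDiff ℝ (⊤ : ℕ∞) fun y => Real.log (μ y) := hμ.log fun x => (hμpos x).ne'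
  have hpdL : ∀ k : Fin n, Continuous fun x => pd (fun y => Real.log (μ y)) k x := by
    intro k
    exact (hlogC.continuous_fderiv_apply (by simp)).comp (continuous_id.prodMk continuous_const)
  have hC : IntegrableOn (fun x => 1/2 * ((∑ k, (grad S x k)^2) * μ x))
      (Set.Icc (0 : Fin n → ℝ) 1) := by
    apply Continuous.integrableOn_Icc
    exact continuous_const.mul
      ((continuous_finset_sum _ fun k _ => ((hpdS k).pow 2)).mul hμ.continuous)
  have hD : IntegrableOn
      (fun x => hbar^2/8 * ((∑ k, (grad (fun y => Real.log (μ y)) x k)^2) * μ x))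
      (Set.Icc (0 : Fin n → ℝ) 1) := by
    apply Continuous.integrableOn_Icc
    exact continuous_const.mul
      ((continuous_finset_sum _ fun k _ => ((hpdL k).pow 2)).mul hμ.continuous)
  have h2 : (∫ x in Set.Icc (0 : Fin n → ℝ) 1, V x * Complex.normSq (Ψ x))
      = ∫ x in Set.Icc (0 : Fin n → ℝ) 1, V x * μ x := by
    simp only [hΨsq]
  have h1 : (hbar^2/2) * (∫ x in Set.Icc (0 : Fin n → ℝ) 1, ∑ k, Complex.normSq (pdC Ψ k x))
      = (1/2) * (∫ x in Set.Icc (0 : Fin n → ℝ) 1, (∑ k, (grad S x k)^2) * μ x)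
        + (hbar^2/8) * (∫ x in Set.Icc (0 : Fin n → ℝ) 1,
            (∑ k, (grad (fun y => Real.log (μ y)) x k)^2) * μ x) := by
    rw [← integral_const_mul, ← integral_const_mul, ← integral_const_mul,
      ← integral_add hC hD]
    exact integral_congr_ae (Filter.Eventually.of_forall fun x => hgradpt x)
  rw [h1, h2]
  ring
end
end

section
/- Conservation of total energy for the Madelung flow: let (μ, S) be smooth solutions on ℝ × 𝕋^n with μ(t,·) > 0 of ∂_t μ + div(μ∇S) = 0 and ∂_t S + ½|∇S|² + V + (ħ²/8)(|∇ln μ|² − (2/μ)Δμ) = 0, with V smooth. Then E(t) = ½∫|∇S|²μ dx + ∫V μ dx + (ħ²/8)∫|∇ln μ|²μ dx is constant in t. -/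
open MeasureTheory Real
noncomputable section

namespace MadelungAux

variable {n : ℕ}

/-- directional derivative of a function on `ℝ × ℝⁿ`. -/
def D (v : ℝ × (Fin n → ℝ)) (f : ℝ × (Fin n → ℝ) → ℝ) : ℝ × (Fin n → ℝ) → ℝ :=
  fun p => fderiv ℝ f p v

theorem D_contDiff (v : ℝ × (Fin n → ℝ)) {f : ℝ × (Fin n → ℝ) → ℝ}
    (hf : ContDiff ℝ (⊤ : ℕ∞) f) : ContDiff ℝ (⊤ : ℕ∞) (D v f) :=
  (hf.fderiv_right (by simp)).clm_apply contDiff_const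

theorem D_add {f g : ℝ × (Fin n → ℝ) → ℝ} (hf : ContDiff ℝ (⊤ : ℕ∞) f) (hg : ContDiff ℝ (⊤ : ℕ∞) g)
    (v : ℝ × (Fin n → ℝ)) :
    D v (fun p => f p + g p) = fun p => D v f p + D v g p := by
  funext p
  simp [D, fderiv_fun_add (hf.differentiable (by simp) p) (hg.differentiable (by simp) p)]

theorem D_neg {f : ℝ × (Fin n → ℝ) → ℝ} (v : ℝ × (Fin n → ℝ)) :
    D v (fun p => -f p) = fun p => -D v f p := by
  funext p; simp [D, fderiv_neg]

theorem D_sub {f g : ℝ × (Fin n → ℝ) → ℝ} (hf : ContDiff ℝ (⊤ : ℕ∞) f) (hg : ContDiff ℝ (⊤ : ℕ∞) g)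
    (v : ℝ × (Fin n → ℝ)) :
    D v (fun p => f p - g p) = fun p => D v f p - D v g p := by
  funext p
  simp [D, fderiv_fun_sub (hf.differentiable (by simp) p) (hg.differentiable (by simp) p)]

theorem D_mul {f g : ℝ × (Fin n → ℝ) → ℝ} (hf : ContDiff ℝ (⊤ : ℕ∞) f) (hg : ContDiff ℝ (⊤ : ℕ∞) g)
    (v : ℝ × (Fin n → ℝ)) :
    D v (fun p => f p * g p) = fun p => f p * D v g p + g p * D v f p := by
  funext p
  simp [D, fderiv_fun_mul (hf.differentiable (by simp) p) (hg.differentiable (by simp) p)]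

theorem D_const_mul {f : ℝ × (Fin n → ℝ) → ℝ} (hf : ContDiff ℝ (⊤ : ℕ∞) f) (c : ℝ)
    (v : ℝ × (Fin n → ℝ)) :
    D v (fun p => c * f p) = fun p => c * D v f p := by
  funext p
  simp [D, fderiv_const_mul (hf.differentiable (by simp) p)]

theorem D_sum {ι : Type*} {s : Finset ι} {f : ι → ℝ × (Fin n → ℝ) → ℝ}
    (hf : ∀ i, ContDiff ℝ (⊤ : ℕ∞) (f i)) (v : ℝ × (Fin n → ℝ)) :
    D v (fun p => ∑ i ∈ s, f i p) = fun p => ∑ i ∈ s, D v (f i) p := by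
  funext p
  simp only [D]
  rw [fderiv_fun_sum (fun i _ => (hf i).differentiable (by simp) p)]
  simp

theorem D_inv {g : ℝ × (Fin n → ℝ) → ℝ} (hg : ContDiff ℝ (⊤ : ℕ∞) g)
    (hg0 : ∀ p, g p ≠ 0) (v : ℝ × (Fin n → ℝ)) :
    D v (fun p => (g p)⁻¹) = fun p => -(D v g p) / (g p)^2 := by
  funext p
  have h : HasFDerivAt (fun p => (g p)⁻¹) (-(g p ^ 2)⁻¹ • fderiv ℝ g p) p :=
    (hasDerivAt_inv (hg0 p)).comp_hasFDerivAt p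
      (hg.differentiable (by simp) p).hasFDerivAt
  have : D v (fun p => (g p)⁻¹) p = fderiv ℝ (fun p => (g p)⁻¹) p v := rfl
  rw [this, h.fderiv]
  simp [D]
  field_simp

theorem D_div {f g : ℝ × (Fin n → ℝ) → ℝ} (hf : ContDiff ℝ (⊤ : ℕ∞) f) (hg : ContDiff ℝ (⊤ : ℕ∞) g)
    (hg0 : ∀ p, g p ≠ 0) (v : ℝ × (Fin n → ℝ)) :
    D v (fun p => f p / g p) = fun p =>
      (D v f p * g p - f p * D v g p) / (g p)^2 := by
  have e : (fun p => f p / g p) = fun p => f p * (g p)⁻¹ := by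
    funext p; rw [div_eq_mul_inv]
  rw [e, D_mul (g := fun p => (g p)⁻¹) hf (hg.inv hg0), D_inv hg hg0]
  funext p
  have h0 := hg0 p
  field_simp
  ring

theorem D_comm {f : ℝ × (Fin n → ℝ) → ℝ} (hf : ContDiff ℝ (⊤ : ℕ∞) f)
    (v w : ℝ × (Fin n → ℝ)) : D v (D w f) = D w (D v f) := by
  have hd : ∀ y, HasFDerivAt f (fderiv ℝ f y) y :=
    fun y => (hf.differentiable (by simp) y).hasFDerivAt
  have hdd : ∀ p, HasFDerivAt (fderiv ℝ f) (fderiv ℝ (fderiv ℝ f) p) p := fun p =>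
    (((hf.fderiv_right (m := (⊤ : ℕ∞)) (by simp)).differentiable (by simp)) p).hasFDerivAt
  have key : ∀ (p) (a b : ℝ × (Fin n → ℝ)),
      D a (D b f) p = fderiv ℝ (fderiv ℝ f) p a b := by
    intro p a b
    have h1 : HasFDerivAt (fun q => fderiv ℝ f q b)
        ((fderiv ℝ (fderiv ℝ f) p).flip b) p := by
      have := (hdd p).clm_apply (hasFDerivAt_const b p)
      simpa using this
    have e : D a (D b f) p = fderiv ℝ (fun q => fderiv ℝ f q b) p a := rfl
    rw [e, h1.fderiv]
    rfl
  funext p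
  rw [key p v w, key p w v]
  exact second_derivative_symmetric hd (hdd p) v w

theorem hasFDerivAt_slice (f : ℝ × (Fin n → ℝ) → ℝ) (hf : ContDiff ℝ (⊤ : ℕ∞) f)
    (t : ℝ) (x : Fin n → ℝ) :
    HasFDerivAt (fun y => f (t, y))
      ((fderiv ℝ f (t, x)).comp (ContinuousLinearMap.inr ℝ ℝ (Fin n → ℝ))) x := by
  have hι : HasFDerivAt (fun y : Fin n → ℝ => ((t, y) : ℝ × (Fin n → ℝ)))
      (ContinuousLinearMap.inr ℝ ℝ (Fin n → ℝ)) x := by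
    have := (hasFDerivAt_const (𝕜 := ℝ) t x).prodMk (hasFDerivAt_id x)
    exact this
  exact ((hf.differentiable (by simp) (t, x)).hasFDerivAt.comp x hι)

theorem pd_slice (f : ℝ × (Fin n → ℝ) → ℝ) (hf : ContDiff ℝ (⊤ : ℕ∞) f)
    (t : ℝ) (x : Fin n → ℝ) (k : Fin n) :
    pd (fun y => f (t, y)) k x = D (0, Pi.single k 1) f (t, x) := by
  rw [pd, (hasFDerivAt_slice f hf t x).fderiv]
  rfl

theorem pdt_slice (f : ℝ × (Fin n → ℝ) → ℝ) (hf : ContDiff ℝ (⊤ : ℕ∞) f)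
    (t : ℝ) (x : Fin n → ℝ) :
    pdt f t x = D (1, 0) f (t, x) := by
  have hι : HasDerivAt (fun s : ℝ => ((s, x) : ℝ × (Fin n → ℝ))) (1, 0) t := by
    have := (hasDerivAt_id t).prodMk (hasDerivAt_const t x)
    simpa using this
  have h : HasDerivAt (fun s => f (s, x)) (fderiv ℝ f (t, x) (1, 0)) t :=
    (hf.differentiable (by simp) (t, x)).hasFDerivAt.comp_hasDerivAt t hι
  rw [pdt, h.deriv]
  rfl

theorem pd_log_slice (μ : ℝ × (Fin n → ℝ) → ℝ) (hμ : ContDiff ℝ (⊤ : ℕ∞) μ)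
    (hμpos : ∀ t x, 0 < μ (t, x)) (t : ℝ) (x : Fin n → ℝ) (k : Fin n) :
    pd (fun y => Real.log (μ (t, y))) k x
      = D (0, Pi.single k 1) μ (t, x) / μ (t, x) := by
  have h := (hasFDerivAt_slice μ hμ t x).log (ne_of_gt (hμpos t x))
  rw [pd, h.fderiv]
  simp [D, div_eq_inv_mul]

/-- slice of a `D`-derivative, as a function. -/
theorem slice_fun_eq (f : ℝ × (Fin n → ℝ) → ℝ) (hf : ContDiff ℝ (⊤ : ℕ∞) f)
    (t : ℝ) (k : Fin n) :
    pd (fun y => f (t, y)) k = fun y => D (0, Pi.single k 1) f (t, y) := by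
  funext y; exact pd_slice f hf t y k

theorem lap_slice (μ : ℝ × (Fin n → ℝ) → ℝ) (hμ : ContDiff ℝ (⊤ : ℕ∞) μ)
    (t : ℝ) (x : Fin n → ℝ) :
    lap (fun y => μ (t, y)) x
      = ∑ k, D (0, Pi.single k 1) (D (0, Pi.single k 1) μ) (t, x) := by
  unfold lap
  refine Finset.sum_congr rfl fun k _ => ?_
  rw [show (pd (fun y => μ (t, y)) k) = fun y => D (0, Pi.single k 1) μ (t, y) from
    slice_fun_eq μ hμ t k]
  exact pd_slice _ (D_contDiff _ hμ) t x k

/-- periodicity is inherited by `D`-derivatives. -/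
theorem D_periodic {f : ℝ × (Fin n → ℝ) → ℝ} (hf : ContDiff ℝ (⊤ : ℕ∞) f)
    {c : ℝ × (Fin n → ℝ)} (hper : ∀ p, f (p + c) = f p) (v : ℝ × (Fin n → ℝ)) :
    ∀ p, D v f (p + c) = D v f p := by
  intro p
  have h1 : HasFDerivAt (fun q => f (q + c)) (fderiv ℝ f (p + c)) p := by
    have hg : HasFDerivAt (fun q : ℝ × (Fin n → ℝ) => q + c)
        (ContinuousLinearMap.id ℝ _) p := by
      simpa using (hasFDerivAt_id p).add_const c
    exact ((hf.differentiable (by simp) (p + c)).hasFDerivAt.comp p hg)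
  have h2 : (fun q => f (q + c)) = f := funext hper
  rw [h2] at h1
  simp only [D, h1.fderiv]

theorem insertNth_one_eq {m : ℕ} (k : Fin (m+1)) (x : Fin m → ℝ) :
    (Fin.insertNth k (1:ℝ) x : Fin (m+1) → ℝ)
      = (((Fin.insertNth k (0:ℝ) x : Fin (m+1) → ℝ) + Pi.single k (1:ℝ)) : Fin (m+1) → ℝ) := by
  funext j
  refine Fin.succAboveCases k ?_ ?_ j
  · simp
  · intro i
    simp [Fin.insertNth_apply_succAbove, Pi.single_eq_of_ne (Fin.succAbove_ne k i)]

theorem int_pd_zero {m : ℕ} (h : (Fin m → ℝ) → ℝ) (hh : ContDiff ℝ (⊤ : ℕ∞) h)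
    (hper : ∀ x (k : Fin m), h (x + Pi.single k 1) = h x) (k : Fin m) :
    ∫ x in Set.Icc (0:Fin m → ℝ) 1, pd h k x = 0 := by
  cases m with
  | zero => exact absurd k.2 (by simp)
  | succ n =>
    have hle : (0 : Fin (n+1) → ℝ) ≤ 1 := fun i => zero_le_one
    have hfc : ContDiff ℝ (⊤ : ℕ∞) (fderiv ℝ h) := hh.fderiv_right (by simp)
    have hpd_cont : Continuous (pd h k) :=
      (hfc.continuous.clm_apply continuous_const)
    have key := MeasureTheory.integral_divergence_of_hasFDerivAt_off_countable'
      (0 : Fin (n+1) → ℝ) 1 hle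
      (fun i x => if i = k then h x else 0)
      (fun i x => if i = k then fderiv ℝ h x else 0)
      ∅ Set.countable_empty
      (fun i => by
        by_cases hik : i = k
        · simpa [hik] using hh.continuous.continuousOn
        · simp [hik]; exact continuousOn_const)
      (fun x _ i => by
        by_cases hik : i = k
        · simpa [hik] using (hh.differentiable (by simp) x).hasFDerivAt
        · simp [hik]; exact hasFDerivAt_const 0 x)
      (by
        have : (fun x : Fin (n+1) → ℝ =>
            ∑ i, (if i = k then fderiv ℝ h x else 0) (Pi.single i 1)) = pd h k := by
          funext x
          rw [Finset.sum_eq_single k]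
          · simp [pd]
          · intro b _ hb; simp [hb]
          · simp
        rw [this]
        exact hpd_cont.continuousOn.integrableOn_compact isCompact_Icc)
    have lhs_eq : (∫ x in Set.Icc (0:Fin (n+1) → ℝ) 1,
        ∑ i, (if i = k then fderiv ℝ h x else 0) (Pi.single i 1))
        = ∫ x in Set.Icc (0:Fin (n+1) → ℝ) 1, pd h k x := by
      refine setIntegral_congr_fun measurableSet_Icc fun x _ => ?_
      rw [Finset.sum_eq_single k]
      · simp [pd]
      · intro b _ hb; simp [hb]
      · simp
    rw [lhs_eq] at key
    rw [key]
    refine Finset.sum_eq_zero fun i _ => ?_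
    by_cases hik : i = k
    · subst hik
      simp only [if_pos rfl]
      have : ∀ x : Fin n → ℝ, h (Fin.insertNth i ((1 : Fin (n+1) → ℝ) i) x)
          = h (Fin.insertNth i ((0 : Fin (n+1) → ℝ) i) x) := by
        intro x
        simp only [Pi.one_apply, Pi.zero_apply]
        rw [insertNth_one_eq, hper]
      simp only [this, sub_self]
    · simp [hik]

theorem hasDerivAt_time (g : ℝ × (Fin n → ℝ) → ℝ) (hg : ContDiff ℝ (⊤ : ℕ∞) g)
    (x : Fin n → ℝ) (t : ℝ) :
    HasDerivAt (fun s => g (s, x)) (D (1, 0) g (t, x)) t := by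
  have hι : HasDerivAt (fun s : ℝ => ((s, x) : ℝ × (Fin n → ℝ))) (1, 0) t := by
    have := (hasDerivAt_id t).prodMk (hasDerivAt_const t x)
    simpa using this
  exact (hg.differentiable (by simp) (t, x)).hasFDerivAt.comp_hasDerivAt t hι

theorem hasDerivAt_int {g : ℝ × (Fin n → ℝ) → ℝ} (hg : ContDiff ℝ (⊤ : ℕ∞) g) (t₀ : ℝ) :
    HasDerivAt (fun t => ∫ x in Set.Icc (0:Fin n → ℝ) 1, g (t, x))
      (∫ x in Set.Icc (0:Fin n → ℝ) 1, D (1, 0) g (t₀, x)) t₀ := by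
  have hDg : Continuous (D (1, 0) g) := (D_contDiff _ hg).continuous
  obtain ⟨M, hM⟩ := (isCompact_Icc.prod isCompact_Icc
    : IsCompact ((Set.Icc (t₀ - 1) (t₀ + 1)) ×ˢ (Set.Icc (0:Fin n → ℝ) 1))).exists_bound_of_continuousOn
    hDg.continuousOn
  have main := hasDerivAt_integral_of_dominated_loc_of_deriv_le
    (μ := (volume : Measure (Fin n → ℝ)).restrict (Set.Icc 0 1))
    (F := fun t x => g (t, x)) (F' := fun t x => D (1, 0) g (t, x))
    (x₀ := t₀) (bound := fun _ => M) (Metric.ball_mem_nhds t₀ one_pos)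
    (Filter.Eventually.of_forall fun t =>
      (hg.continuous.comp (Continuous.prodMk_right t)).aestronglyMeasurable)
    ((hg.continuous.comp (Continuous.prodMk_right t₀)).continuousOn.integrableOn_compact
      isCompact_Icc)
    ((hDg.comp (Continuous.prodMk_right t₀)).aestronglyMeasurable)
    ?_ ?_ ?_
  · exact main.2
  · filter_upwards [ae_restrict_mem measurableSet_Icc] with x hx
    intro t ht
    apply hM
    refine ⟨?_, hx⟩
    rw [Real.ball_eq_Ioo] at ht
    exact Set.Ioo_subset_Icc_self ht
  · exact integrableOn_const (isCompact_Icc.measure_lt_top).ne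
  · exact Filter.Eventually.of_forall fun x => fun t _ => hasDerivAt_time g hg x t

theorem D_sq {f : ℝ × (Fin n → ℝ) → ℝ} (hf : ContDiff ℝ (⊤ : ℕ∞) f) (v : ℝ × (Fin n → ℝ)) :
    D v (fun p => (f p)^2) = fun p => 2 * (f p * D v f p) := by
  have e : (fun p => (f p)^2) = fun p => f p * f p := by funext p; ring
  rw [e, D_mul hf hf]
  funext p; ring

theorem Dt_Vsnd {V : (Fin n → ℝ) → ℝ} (hV : ContDiff ℝ (⊤ : ℕ∞) V) :
    D ((1:ℝ), (0 : Fin n → ℝ)) (fun p => V p.2) = fun _ => 0 := by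
  funext p
  have h : HasFDerivAt (fun p : ℝ × (Fin n → ℝ) => V p.2)
      ((fderiv ℝ V p.2).comp (ContinuousLinearMap.snd ℝ ℝ (Fin n → ℝ))) p :=
    ((hV.differentiable (by simp) p.2).hasFDerivAt.comp p hasFDerivAt_snd)
  have e : D ((1:ℝ), (0 : Fin n → ℝ)) (fun p => V p.2) p
      = fderiv ℝ (fun p : ℝ × (Fin n → ℝ) => V p.2) p (1, 0) := rfl
  rw [e, h.fderiv]
  simp

/-- energy density (reduced form). -/
def eF {n : ℕ} (μ S : ℝ × (Fin n → ℝ) → ℝ) (hbar : ℝ) : ℝ × (Fin n → ℝ) → ℝ :=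
  fun p => -(μ p * D ((1:ℝ), (0 : Fin n → ℝ)) S p)
    + hbar^2/4 * ∑ k, D ((0:ℝ), Pi.single k 1) (D ((0:ℝ), Pi.single k 1) μ) p

/-- energy flux. -/
def WF {n : ℕ} (μ S : ℝ × (Fin n → ℝ) → ℝ) (hbar : ℝ) (k : Fin n) :
    ℝ × (Fin n → ℝ) → ℝ :=
  fun p => (μ p * D ((0:ℝ), Pi.single k 1) S p) * D ((1:ℝ), (0:Fin n → ℝ)) S p
    + hbar^2/4 * ((D ((1:ℝ), (0:Fin n → ℝ)) μ p * D ((0:ℝ), Pi.single k 1) μ p) / μ p)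

/-- right-hand side of Hamilton–Jacobi, in `D` form. -/
def hF {n : ℕ} (μ S : ℝ × (Fin n → ℝ) → ℝ) (V : (Fin n → ℝ) → ℝ) (hbar : ℝ) :
    ℝ × (Fin n → ℝ) → ℝ :=
  fun p => -(1/2 * ∑ k, (D ((0:ℝ), Pi.single k 1) S p)^2) + -(V p.2)
    + -(hbar^2/8 * ((∑ k, (D ((0:ℝ), Pi.single k 1) μ p)^2) / (μ p)^2))
    + hbar^2/4 * ((∑ k, D ((0:ℝ), Pi.single k 1) (D ((0:ℝ), Pi.single k 1) μ) p) / μ p)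

theorem div_identity {n : ℕ} {μ S : ℝ × (Fin n → ℝ) → ℝ} {V : (Fin n → ℝ) → ℝ} {hbar : ℝ}
    (hμ : ContDiff ℝ (⊤ : ℕ∞) μ) (hS : ContDiff ℝ (⊤ : ℕ∞) S) (hV : ContDiff ℝ (⊤ : ℕ∞) V)
    (hμpos : ∀ p, 0 < μ p)
    (hC : D ((1:ℝ), (0:Fin n → ℝ)) μ
      = fun p => -∑ k, D ((0:ℝ), Pi.single k 1)
          (fun q => μ q * D ((0:ℝ), Pi.single k 1) S q) p)
    (hH : D ((1:ℝ), (0:Fin n → ℝ)) S = hF μ S V hbar) :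
    ∀ p, D ((1:ℝ), (0:Fin n → ℝ)) (eF μ S hbar) p
      = ∑ k, D ((0:ℝ), Pi.single k 1) (WF μ S hbar k) p := by
  have hu : ∀ p, μ p ≠ 0 := fun p => (hμpos p).ne'
  have hTs : ContDiff ℝ (⊤ : ℕ∞) (D ((1:ℝ), (0:Fin n → ℝ)) S) := D_contDiff _ hS
  have hTu : ContDiff ℝ (⊤ : ℕ∞) (D ((1:ℝ), (0:Fin n → ℝ)) μ) := D_contDiff _ hμ
  have ha : ∀ k : Fin n, ContDiff ℝ (⊤ : ℕ∞) (D ((0:ℝ), Pi.single k 1) S) :=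
    fun k => D_contDiff _ hS
  have hb : ∀ k : Fin n, ContDiff ℝ (⊤ : ℕ∞) (D ((0:ℝ), Pi.single k 1) μ) :=
    fun k => D_contDiff _ hμ
  have hL : ∀ k : Fin n, ContDiff ℝ (⊤ : ℕ∞)
      (D ((0:ℝ), Pi.single k 1) (D ((0:ℝ), Pi.single k 1) μ)) :=
    fun k => D_contDiff _ (hb k)
  have commS : ∀ k : Fin n, D ((1:ℝ), (0:Fin n → ℝ)) (D ((0:ℝ), Pi.single k 1) S)
      = D ((0:ℝ), Pi.single k 1) (D ((1:ℝ), (0:Fin n → ℝ)) S) :=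
    fun k => D_comm hS _ _
  have commU : ∀ k : Fin n, D ((1:ℝ), (0:Fin n → ℝ)) (D ((0:ℝ), Pi.single k 1) μ)
      = D ((0:ℝ), Pi.single k 1) (D ((1:ℝ), (0:Fin n → ℝ)) μ) :=
    fun k => D_comm hμ _ _
  have comm3 : ∀ k : Fin n,
      D ((1:ℝ), (0:Fin n → ℝ)) (D ((0:ℝ), Pi.single k 1) (D ((0:ℝ), Pi.single k 1) μ))
      = D ((0:ℝ), Pi.single k 1) (D ((0:ℝ), Pi.single k 1)
          (D ((1:ℝ), (0:Fin n → ℝ)) μ)) := by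
    intro k
    rw [D_comm (hb k) ((1:ℝ), (0:Fin n → ℝ)) ((0:ℝ), Pi.single k 1), commU k]
  intro p
  -- LHS expansion
  unfold eF
  rw [D_add ((hμ.mul hTs).neg) (contDiff_const.mul (ContDiff.sum fun k _ => hL k)),
      D_neg, D_mul hμ hTs,
      D_const_mul (ContDiff.sum fun k _ => hL k),
      D_sum (fun k => hL k)]
  simp only []
  simp only [comm3]
  rw [show D ((1:ℝ), (0:Fin n → ℝ)) (D ((1:ℝ), (0:Fin n → ℝ)) S)
      = D ((1:ℝ), (0:Fin n → ℝ)) (hF μ S V hbar) from congrArg _ hH]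
  -- expand D (1,0) hF
  have h1 : ContDiff ℝ (⊤ : ℕ∞) (fun p => -(1/2 * ∑ k, (D ((0:ℝ), Pi.single k 1) S p)^2)) :=
    (contDiff_const.mul (ContDiff.sum fun k _ => (ha k).pow 2)).neg
  have h2 : ContDiff ℝ (⊤ : ℕ∞) (fun p : ℝ × (Fin n → ℝ) => -(V p.2)) :=
    (hV.comp contDiff_snd).neg
  have h3 : ContDiff ℝ (⊤ : ℕ∞) (fun p =>
      -(hbar^2/8 * ((∑ k, (D ((0:ℝ), Pi.single k 1) μ p)^2) / (μ p)^2))) :=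
    (contDiff_const.mul ((ContDiff.sum fun k _ => (hb k).pow 2).div (hμ.pow 2)
      (fun p => pow_ne_zero 2 (hu p)))).neg
  have h4 : ContDiff ℝ (⊤ : ℕ∞) (fun p => hbar^2/4 *
      ((∑ k, D ((0:ℝ), Pi.single k 1) (D ((0:ℝ), Pi.single k 1) μ) p) / μ p)) :=
    contDiff_const.mul ((ContDiff.sum fun k _ => hL k).div hμ hu)
  unfold hF
  rw [D_add ((h1.add h2).add h3) h4, D_add (h1.add h2) h3, D_add h1 h2]
  simp only [D_neg]
  rw [D_const_mul (ContDiff.sum fun k _ => (ha k).pow 2) (1/2),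
      D_sum (fun k => (ha k).pow 2),
      D_const_mul (f := fun p => (∑ k, (D ((0:ℝ), Pi.single k 1) μ p)^2) / (μ p)^2)
        ((ContDiff.sum fun k _ => (hb k).pow 2).div (hμ.pow 2)
        (fun p => pow_ne_zero 2 (hu p))) (hbar^2/8),
      D_div (ContDiff.sum fun k _ => (hb k).pow 2) (hμ.pow 2)
        (fun p => pow_ne_zero 2 (hu p)),
      D_sum (fun k => (hb k).pow 2),
      D_sq hμ,
      D_const_mul (f := fun p => (∑ k, D ((0:ℝ), Pi.single k 1) (D ((0:ℝ), Pi.single k 1) μ) p) / μ p)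
        ((ContDiff.sum fun k _ => hL k).div hμ hu) (hbar^2/4),
      D_div (ContDiff.sum fun k _ => hL k) hμ hu,
      D_sum (fun k => hL k),
      Dt_Vsnd hV]
  simp only [fun k => D_sq (ha k) ((1:ℝ), (0:Fin n → ℝ)),
             fun k => D_sq (hb k) ((1:ℝ), (0:Fin n → ℝ)), commS, commU, comm3]
  have famW : ∀ k : Fin n, D ((0:ℝ), Pi.single k 1) (WF μ S hbar k)
      = fun p => ((μ p * D ((0:ℝ), Pi.single k 1) S p) * D ((0:ℝ), Pi.single k 1) (D ((1:ℝ), (0:Fin n → ℝ)) S) p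
          + D ((1:ℝ), (0:Fin n → ℝ)) S p * D ((0:ℝ), Pi.single k 1) (fun q => μ q * D ((0:ℝ), Pi.single k 1) S q) p)
        + hbar^2/4 * (((D ((1:ℝ), (0:Fin n → ℝ)) μ p * D ((0:ℝ), Pi.single k 1) (D ((0:ℝ), Pi.single k 1) μ) p
            + D ((0:ℝ), Pi.single k 1) μ p * D ((0:ℝ), Pi.single k 1) (D ((1:ℝ), (0:Fin n → ℝ)) μ) p) * μ p
            - (D ((1:ℝ), (0:Fin n → ℝ)) μ p * D ((0:ℝ), Pi.single k 1) μ p) * D ((0:ℝ), Pi.single k 1) μ p) / (μ p)^2) := by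
    intro k
    unfold WF
    rw [D_add (g := fun p => hbar^2/4 * (D ((1:ℝ), (0:Fin n → ℝ)) μ p * D ((0:ℝ), Pi.single k 1) μ p / μ p))
          ((hμ.mul (ha k)).mul hTs) (contDiff_const.mul ((hTu.mul (hb k)).div hμ hu)),
        D_mul (hμ.mul (ha k)) hTs,
        D_const_mul (f := fun p => D ((1:ℝ), (0:Fin n → ℝ)) μ p * D ((0:ℝ), Pi.single k 1) μ p / μ p)
          ((hTu.mul (hb k)).div hμ hu) (hbar^2/4),
        D_div (hTu.mul (hb k)) hμ hu,
        D_mul hTu (hb k)]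
  simp only [famW]
  rw [Finset.sum_add_distrib, Finset.sum_add_distrib]
  rw [show (∑ x : Fin n, μ p * D ((0:ℝ), Pi.single x 1) S p * D ((0:ℝ), Pi.single x 1) (D ((1:ℝ), (0:Fin n → ℝ)) S) p)
      = μ p * ∑ x : Fin n, D ((0:ℝ), Pi.single x 1) S p * D ((0:ℝ), Pi.single x 1) (D ((1:ℝ), (0:Fin n → ℝ)) S) p from
    (Finset.sum_congr rfl fun k _ => by ring).trans (Finset.mul_sum _ _ _).symm]
  rw [show (∑ x : Fin n, D ((1:ℝ), (0:Fin n → ℝ)) S p * D ((0:ℝ), Pi.single x 1) (fun q => μ q * D ((0:ℝ), Pi.single x 1) S q) p)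
      = D ((1:ℝ), (0:Fin n → ℝ)) S p * ∑ x : Fin n, D ((0:ℝ), Pi.single x 1) (fun q => μ q * D ((0:ℝ), Pi.single x 1) S q) p from
    (Finset.mul_sum _ _ _).symm]
  rw [show (∑ x : Fin n, hbar ^ 2 / 4 *
        (((D ((1:ℝ), (0:Fin n → ℝ)) μ p * D ((0:ℝ), Pi.single x 1) (D ((0:ℝ), Pi.single x 1) μ) p
          + D ((0:ℝ), Pi.single x 1) μ p * D ((0:ℝ), Pi.single x 1) (D ((1:ℝ), (0:Fin n → ℝ)) μ) p) * μ p
          - D ((1:ℝ), (0:Fin n → ℝ)) μ p * D ((0:ℝ), Pi.single x 1) μ p * D ((0:ℝ), Pi.single x 1) μ p) / μ p ^ 2))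
      = hbar ^ 2 / 4 * ((μ p * (D ((1:ℝ), (0:Fin n → ℝ)) μ p * ∑ x : Fin n, D ((0:ℝ), Pi.single x 1) (D ((0:ℝ), Pi.single x 1) μ) p)
          + μ p * ∑ x : Fin n, D ((0:ℝ), Pi.single x 1) μ p * D ((0:ℝ), Pi.single x 1) (D ((1:ℝ), (0:Fin n → ℝ)) μ) p
          - D ((1:ℝ), (0:Fin n → ℝ)) μ p * ∑ x : Fin n, D ((0:ℝ), Pi.single x 1) μ p ^ 2) / μ p ^ 2) from by
    have mid : (∑ x : Fin n, hbar ^ 2 / 4 *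
        (((D ((1:ℝ), (0:Fin n → ℝ)) μ p * D ((0:ℝ), Pi.single x 1) (D ((0:ℝ), Pi.single x 1) μ) p
          + D ((0:ℝ), Pi.single x 1) μ p * D ((0:ℝ), Pi.single x 1) (D ((1:ℝ), (0:Fin n → ℝ)) μ) p) * μ p
          - D ((1:ℝ), (0:Fin n → ℝ)) μ p * D ((0:ℝ), Pi.single x 1) μ p * D ((0:ℝ), Pi.single x 1) μ p) / μ p ^ 2))
        = ∑ x : Fin n, hbar ^ 2 / 4 *
          ((μ p * (D ((1:ℝ), (0:Fin n → ℝ)) μ p * D ((0:ℝ), Pi.single x 1) (D ((0:ℝ), Pi.single x 1) μ) p)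
            + μ p * (D ((0:ℝ), Pi.single x 1) μ p * D ((0:ℝ), Pi.single x 1) (D ((1:ℝ), (0:Fin n → ℝ)) μ) p)
            - D ((1:ℝ), (0:Fin n → ℝ)) μ p * D ((0:ℝ), Pi.single x 1) μ p ^ 2) / μ p ^ 2) :=
      Finset.sum_congr rfl fun k _ => by ring
    rw [mid, ← Finset.mul_sum, ← Finset.sum_div, Finset.sum_sub_distrib,
        Finset.sum_add_distrib, ← Finset.mul_sum, ← Finset.mul_sum, ← Finset.mul_sum,
        ← Finset.mul_sum]]
  rw [show (∑ x : Fin n, D ((0:ℝ), Pi.single x 1) (fun q => μ q * D ((0:ℝ), Pi.single x 1) S q) p)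
      = -(D ((1:ℝ), (0:Fin n → ℝ)) μ p) from by have h := congrFun hC p; linarith]
  rw [show (∑ x : Fin n, 2 * (D ((0:ℝ), Pi.single x 1) S p * D ((0:ℝ), Pi.single x 1) (D ((1:ℝ), (0:Fin n → ℝ)) S) p))
      = 2 * ∑ x : Fin n, D ((0:ℝ), Pi.single x 1) S p * D ((0:ℝ), Pi.single x 1) (D ((1:ℝ), (0:Fin n → ℝ)) S) p from (Finset.mul_sum _ _ _).symm]
  rw [show (∑ x : Fin n, 2 * (D ((0:ℝ), Pi.single x 1) μ p * D ((0:ℝ), Pi.single x 1) (D ((1:ℝ), (0:Fin n → ℝ)) μ) p))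
      = 2 * ∑ x : Fin n, D ((0:ℝ), Pi.single x 1) μ p * D ((0:ℝ), Pi.single x 1) (D ((1:ℝ), (0:Fin n → ℝ)) μ) p from (Finset.mul_sum _ _ _).symm]
  have hup := hu p
  field_simp
  ring

end MadelungAux

open MadelungAux

theorem stmt_17 (n : ℕ) (μ S : ℝ × (Fin n → ℝ) → ℝ) (V : (Fin n → ℝ) → ℝ) (hbar : ℝ)
    (hμ : ContDiff ℝ (⊤ : ℕ∞) μ) (hS : ContDiff ℝ (⊤ : ℕ∞) S) (hV : ContDiff ℝ (⊤ : ℕ∞) V)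
    (hμpos : ∀ t x, 0 < μ (t, x)) (hbarpos : 0 < hbar)
    (hμper : ∀ t x k, μ (t, x + Pi.single k 1) = μ (t, x))
    (hSper : ∀ t x k, S (t, x + Pi.single k 1) = S (t, x))
    (hVper : ∀ x k, V (x + Pi.single k 1) = V x)
    (hcont : ∀ t x,
      pdt μ t x + dvg (fun y k => μ (t, y) * grad (fun z => S (t, z)) y k) x = 0)
    (hHJ : ∀ t x,
      pdt S t x + (1/2) * (∑ k, (grad (fun y => S (t, y)) x k)^2) + V x
        + (hbar^2/8) * ((∑ k, (grad (fun y => Real.log (μ (t, y))) x k)^2)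
            - (2 / μ (t, x)) * lap (fun y => μ (t, y)) x) = 0) :
    ∀ t t' : ℝ,
      ((1/2) * ∫ x in Set.Icc (0 : Fin n → ℝ) 1,
          (∑ k, (grad (fun y => S (t, y)) x k)^2) * μ (t, x))
        + (∫ x in Set.Icc (0 : Fin n → ℝ) 1, V x * μ (t, x))
        + (hbar^2/8) * (∫ x in Set.Icc (0 : Fin n → ℝ) 1,
            (∑ k, (grad (fun y => Real.log (μ (t, y))) x k)^2) * μ (t, x))
      = ((1/2) * ∫ x in Set.Icc (0 : Fin n → ℝ) 1,
          (∑ k, (grad (fun y => S (t', y)) x k)^2) * μ (t', x))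
        + (∫ x in Set.Icc (0 : Fin n → ℝ) 1, V x * μ (t', x))
        + (hbar^2/8) * (∫ x in Set.Icc (0 : Fin n → ℝ) 1,
            (∑ k, (grad (fun y => Real.log (μ (t', y))) x k)^2) * μ (t', x)) := by
  have hupos : ∀ p : ℝ × (Fin n → ℝ), 0 < μ p := fun p => hμpos p.1 p.2
  have hu : ∀ p : ℝ × (Fin n → ℝ), μ p ≠ 0 := fun p => (hupos p).ne'
  -- function-level continuity equation
  have hC : D ((1:ℝ), (0:Fin n → ℝ)) μ
      = fun p => -∑ k, D ((0:ℝ), Pi.single k 1)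
          (fun q => μ q * D ((0:ℝ), Pi.single k 1) S q) p := by
    funext p
    obtain ⟨t0, x⟩ := p
    have H := hcont t0 x
    rw [pdt_slice μ hμ t0 x] at H
    unfold dvg at H
    have e1 : ∀ k : Fin n, pd (fun y => μ (t0, y) * grad (fun z => S (t0, z)) y k) k x
        = D ((0:ℝ), Pi.single k 1) (fun q => μ q * D ((0:ℝ), Pi.single k 1) S q) (t0, x) := by
      intro k
      have e0 : (fun y => μ (t0, y) * grad (fun z => S (t0, z)) y k)
          = fun y => (fun q => μ q * D ((0:ℝ), Pi.single k 1) S q) (t0, y) := by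
        funext y
        simp only [grad, pd_slice S hS t0 y k]
      rw [e0, pd_slice _ (hμ.mul (D_contDiff _ hS)) t0 x k]
    simp only [e1] at H
    show D ((1:ℝ), (0:Fin n → ℝ)) μ (t0, x)
        = -∑ k, D ((0:ℝ), Pi.single k 1)
            (fun q => μ q * D ((0:ℝ), Pi.single k 1) S q) (t0, x)
    linarith
  -- function-level Hamilton–Jacobi equation
  have hH : D ((1:ℝ), (0:Fin n → ℝ)) S = hF μ S V hbar := by
    funext p
    obtain ⟨t0, x⟩ := p
    have H := hHJ t0 x
    rw [pdt_slice S hS t0 x, lap_slice μ hμ t0 x] at H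
    simp only [grad, show ∀ k : Fin n, pd (fun y => S (t0, y)) k x
        = D ((0:ℝ), Pi.single k 1) S (t0, x) from fun k => pd_slice S hS t0 x k,
      show ∀ k : Fin n, pd (fun y => Real.log (μ (t0, y))) k x
        = D ((0:ℝ), Pi.single k 1) μ (t0, x) / μ (t0, x) from
        fun k => pd_log_slice μ hμ hμpos t0 x k] at H
    show D ((1:ℝ), (0:Fin n → ℝ)) S (t0, x)
        = -(1/2 * ∑ k, (D ((0:ℝ), Pi.single k 1) S (t0, x))^2) + -(V x)
          + -(hbar^2/8 * ((∑ k, (D ((0:ℝ), Pi.single k 1) μ (t0, x))^2) / (μ (t0, x))^2))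
          + hbar^2/4 * ((∑ k, D ((0:ℝ), Pi.single k 1)
              (D ((0:ℝ), Pi.single k 1) μ) (t0, x)) / μ (t0, x))
    simp only [div_pow, ← Finset.sum_div] at H
    have hu0 : μ (t0, x) ≠ 0 := (hμpos t0 x).ne'
    field_simp at H ⊢
    linarith
  -- periodicity lemmas in product form
  have hμper' : ∀ (j : Fin n) (p : ℝ × (Fin n → ℝ)),
      μ (p + ((0:ℝ), Pi.single j 1)) = μ p := by
    rintro j ⟨a, b⟩
    show μ (a + 0, b + Pi.single j 1) = μ (a, b)
    rw [add_zero]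
    exact hμper a b j
  have hSper' : ∀ (j : Fin n) (p : ℝ × (Fin n → ℝ)),
      S (p + ((0:ℝ), Pi.single j 1)) = S p := by
    rintro j ⟨a, b⟩
    show S (a + 0, b + Pi.single j 1) = S (a, b)
    rw [add_zero]
    exact hSper a b j
  have hWper : ∀ (k j : Fin n) (p : ℝ × (Fin n → ℝ)),
      WF μ S hbar k (p + ((0:ℝ), Pi.single j 1)) = WF μ S hbar k p := by
    intro k j p
    unfold WF
    rw [hμper' j, D_periodic hS (hSper' j) ((0:ℝ), Pi.single k 1) p,
        D_periodic hS (hSper' j) ((1:ℝ), (0:Fin n → ℝ)) p,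
        D_periodic hμ (hμper' j) ((1:ℝ), (0:Fin n → ℝ)) p,
        D_periodic hμ (hμper' j) ((0:ℝ), Pi.single k 1) p]
  have hWsm : ∀ k : Fin n, ContDiff ℝ (⊤ : ℕ∞) (WF μ S hbar k) := fun k =>
    ((hμ.mul (D_contDiff _ hS)).mul (D_contDiff _ hS)).add
      (contDiff_const.mul (((D_contDiff _ hμ).mul (D_contDiff _ hμ)).div hμ hu))
  have heFsm : ContDiff ℝ (⊤ : ℕ∞) (eF μ S hbar) :=
    ((hμ.mul (D_contDiff _ hS)).neg).add
      (contDiff_const.mul (ContDiff.sum fun (k : Fin n) _ => D_contDiff _ (D_contDiff _ hμ)))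
  -- time derivative of the reduced energy vanishes
  have hIzero : ∀ t₀ : ℝ, (∫ x in Set.Icc (0:Fin n → ℝ) 1,
      D ((1:ℝ), (0:Fin n → ℝ)) (eF μ S hbar) (t₀, x)) = 0 := by
    intro t₀
    have e1 : (∫ x in Set.Icc (0:Fin n → ℝ) 1,
        D ((1:ℝ), (0:Fin n → ℝ)) (eF μ S hbar) (t₀, x))
        = ∫ x in Set.Icc (0:Fin n → ℝ) 1,
            ∑ k, D ((0:ℝ), Pi.single k 1) (WF μ S hbar k) (t₀, x) :=
      congrArg _ (funext fun x => div_identity hμ hS hV hupos hC hH (t₀, x))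
    have ifs : ∀ k : Fin n, IntegrableOn
        (fun x : Fin n → ℝ => D ((0:ℝ), Pi.single k 1) (WF μ S hbar k) (t₀, x))
        (Set.Icc (0:Fin n → ℝ) 1) := fun k =>
      (((D_contDiff ((0:ℝ), Pi.single k 1) (hWsm k)).continuous.comp
        (Continuous.prodMk_right t₀)).continuousOn.integrableOn_compact isCompact_Icc)
    rw [e1, MeasureTheory.integral_finset_sum _ (fun k _ => ifs k)]
    refine Finset.sum_eq_zero fun k _ => ?_
    have e2 : (fun x : Fin n → ℝ => D ((0:ℝ), Pi.single k 1) (WF μ S hbar k) (t₀, x))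
        = fun x => pd (fun y => WF μ S hbar k (t₀, y)) k x :=
      funext fun x => (pd_slice (WF μ S hbar k) (hWsm k) t₀ x k).symm
    rw [show (∫ x in Set.Icc (0:Fin n → ℝ) 1,
        D ((0:ℝ), Pi.single k 1) (WF μ S hbar k) (t₀, x))
        = ∫ x in Set.Icc (0:Fin n → ℝ) 1,
            pd (fun y => WF μ S hbar k (t₀, y)) k x from congrArg _ e2]
    refine int_pd_zero _ ((hWsm k).comp (contDiff_const.prodMk contDiff_id)) ?_ k
    intro y j
    show WF μ S hbar k (t₀, y + Pi.single j 1) = WF μ S hbar k (t₀, y)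
    rw [show ((t₀, y + Pi.single j 1) : ℝ × (Fin n → ℝ))
        = (t₀, y) + ((0:ℝ), Pi.single j 1) from by
      show _ = (t₀ + 0, y + Pi.single j 1); rw [add_zero]]
    exact hWper k j (t₀, y)
  have hI : ∀ t₀ : ℝ, HasDerivAt
      (fun t => ∫ x in Set.Icc (0:Fin n → ℝ) 1, eF μ S hbar (t, x)) 0 t₀ := by
    intro t₀
    have h0 := hasDerivAt_int heFsm t₀
    rwa [hIzero t₀] at h0
  have hconst : ∀ a b : ℝ, (∫ x in Set.Icc (0:Fin n → ℝ) 1, eF μ S hbar (a, x))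
      = ∫ x in Set.Icc (0:Fin n → ℝ) 1, eF μ S hbar (b, x) := fun a b =>
    is_const_of_deriv_eq_zero (fun t => (hI t).differentiableAt)
      (fun t => (hI t).deriv) a b
  -- the stated energy equals the reduced integral
  have hE : ∀ τ : ℝ,
      ((1/2) * ∫ x in Set.Icc (0 : Fin n → ℝ) 1,
          (∑ k, (grad (fun y => S (τ, y)) x k)^2) * μ (τ, x))
        + (∫ x in Set.Icc (0 : Fin n → ℝ) 1, V x * μ (τ, x))
        + (hbar^2/8) * (∫ x in Set.Icc (0 : Fin n → ℝ) 1,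
            (∑ k, (grad (fun y => Real.log (μ (τ, y))) x k)^2) * μ (τ, x))
      = ∫ x in Set.Icc (0:Fin n → ℝ) 1, eF μ S hbar (τ, x) := by
    intro τ
    have compC : ∀ {f : ℝ × (Fin n → ℝ) → ℝ}, ContDiff ℝ (⊤ : ℕ∞) f →
        Continuous (fun x : Fin n → ℝ => f (τ, x)) :=
      fun hf => hf.continuous.comp (Continuous.prodMk_right τ)
    have r1 : (fun x : Fin n → ℝ => (∑ k, (grad (fun y => S (τ, y)) x k)^2) * μ (τ, x))
        = fun x => (∑ k, (D ((0:ℝ), Pi.single k 1) S (τ, x))^2) * μ (τ, x) := by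
      funext x
      simp only [grad, show ∀ k : Fin n, pd (fun y => S (τ, y)) k x
        = D ((0:ℝ), Pi.single k 1) S (τ, x) from fun k => pd_slice S hS τ x k]
    have r3 : (fun x : Fin n → ℝ =>
          (∑ k, (grad (fun y => Real.log (μ (τ, y))) x k)^2) * μ (τ, x))
        = fun x => (∑ k, (D ((0:ℝ), Pi.single k 1) μ (τ, x) / μ (τ, x))^2) * μ (τ, x) := by
      funext x
      simp only [grad, show ∀ k : Fin n, pd (fun y => Real.log (μ (τ, y))) k x
        = D ((0:ℝ), Pi.single k 1) μ (τ, x) / μ (τ, x) from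
        fun k => pd_log_slice μ hμ hμpos τ x k]
    rw [show (∫ x in Set.Icc (0 : Fin n → ℝ) 1,
          (∑ k, (grad (fun y => S (τ, y)) x k)^2) * μ (τ, x))
        = ∫ x in Set.Icc (0 : Fin n → ℝ) 1,
          (∑ k, (D ((0:ℝ), Pi.single k 1) S (τ, x))^2) * μ (τ, x) from congrArg _ r1,
      show (∫ x in Set.Icc (0 : Fin n → ℝ) 1,
          (∑ k, (grad (fun y => Real.log (μ (τ, y))) x k)^2) * μ (τ, x))
        = ∫ x in Set.Icc (0 : Fin n → ℝ) 1,
          (∑ k, (D ((0:ℝ), Pi.single k 1) μ (τ, x) / μ (τ, x))^2) * μ (τ, x) from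
        congrArg _ r3]
    have c1 : ∀ (c : ℝ) (f : (Fin n → ℝ) → ℝ),
        c * ∫ x in Set.Icc (0:Fin n → ℝ) 1, f x
          = ∫ x in Set.Icc (0:Fin n → ℝ) 1, c * f x := fun c f => by
      simpa [smul_eq_mul] using (integral_smul c f).symm
    rw [c1 (1/2), c1 (hbar^2/8)]
    beta_reduce
    have i1 : IntegrableOn (fun x : Fin n → ℝ =>
        (1/2) * ((∑ k, (D ((0:ℝ), Pi.single k 1) S (τ, x))^2) * μ (τ, x)))
        (Set.Icc (0:Fin n → ℝ) 1) :=
      (continuous_const.mul ((continuous_finset_sum _ fun k _ =>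
        (compC (D_contDiff _ hS)).pow 2).mul (compC hμ))).continuousOn.integrableOn_compact
        isCompact_Icc
    have i2 : IntegrableOn (fun x : Fin n → ℝ => V x * μ (τ, x))
        (Set.Icc (0:Fin n → ℝ) 1) :=
      (hV.continuous.mul (compC hμ)).continuousOn.integrableOn_compact isCompact_Icc
    have i3 : IntegrableOn (fun x : Fin n → ℝ =>
        (hbar^2/8) * ((∑ k, (D ((0:ℝ), Pi.single k 1) μ (τ, x) / μ (τ, x))^2) * μ (τ, x)))
        (Set.Icc (0:Fin n → ℝ) 1) :=
      (continuous_const.mul ((continuous_finset_sum _ fun k _ =>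
        ((compC (D_contDiff _ hμ)).div (compC hμ) (fun x => hu (τ, x))).pow 2).mul
        (compC hμ))).continuousOn.integrableOn_compact isCompact_Icc
    have i12 : IntegrableOn (fun x : Fin n → ℝ => 1/2 * ((∑ k, (D ((0:ℝ), Pi.single k 1) S (τ, x))^2) * μ (τ, x)) + V x * μ (τ, x))
        (Set.Icc (0:Fin n → ℝ) 1) := i1.add i2
    have splitB : (∫ x in Set.Icc (0:Fin n → ℝ) 1, (1/2 * ((∑ k, (D ((0:ℝ), Pi.single k 1) S (τ, x))^2) * μ (τ, x)) + V x * μ (τ, x)))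
        = (∫ x in Set.Icc (0:Fin n → ℝ) 1, 1/2 * ((∑ k, (D ((0:ℝ), Pi.single k 1) S (τ, x))^2) * μ (τ, x)))
          + ∫ x in Set.Icc (0:Fin n → ℝ) 1, V x * μ (τ, x) :=
      MeasureTheory.integral_add i1 i2
    have splitA : (∫ x in Set.Icc (0:Fin n → ℝ) 1, (1/2 * ((∑ k, (D ((0:ℝ), Pi.single k 1) S (τ, x))^2) * μ (τ, x)) + V x * μ (τ, x) + hbar^2/8 * ((∑ k, (D ((0:ℝ), Pi.single k 1) μ (τ, x) / μ (τ, x))^2) * μ (τ, x))))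
        = (∫ x in Set.Icc (0:Fin n → ℝ) 1, (1/2 * ((∑ k, (D ((0:ℝ), Pi.single k 1) S (τ, x))^2) * μ (τ, x)) + V x * μ (τ, x)))
          + ∫ x in Set.Icc (0:Fin n → ℝ) 1, hbar^2/8 * ((∑ k, (D ((0:ℝ), Pi.single k 1) μ (τ, x) / μ (τ, x))^2) * μ (τ, x)) :=
      MeasureTheory.integral_add i12 i3
    have peq : (∫ x in Set.Icc (0:Fin n → ℝ) 1, (1/2 * ((∑ k, (D ((0:ℝ), Pi.single k 1) S (τ, x))^2) * μ (τ, x)) + V x * μ (τ, x) + hbar^2/8 * ((∑ k, (D ((0:ℝ), Pi.single k 1) μ (τ, x) / μ (τ, x))^2) * μ (τ, x))))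
        = ∫ x in Set.Icc (0:Fin n → ℝ) 1, eF μ S hbar (τ, x) := by
      refine congrArg _ (funext fun x => ?_)
      have hu0 : μ (τ, x) ≠ 0 := hu (τ, x)
      show 1/2 * ((∑ k, (D ((0:ℝ), Pi.single k 1) S (τ, x))^2) * μ (τ, x)) + V x * μ (τ, x) + hbar^2/8 * ((∑ k, (D ((0:ℝ), Pi.single k 1) μ (τ, x) / μ (τ, x))^2) * μ (τ, x))
        = -(μ (τ, x) * D ((1:ℝ), (0:Fin n → ℝ)) S (τ, x))
          + hbar^2/4 * ∑ k, D ((0:ℝ), Pi.single k 1) (D ((0:ℝ), Pi.single k 1) μ) (τ, x)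
      rw [congrFun hH (τ, x)]
      show _ = -(μ (τ, x) * (-(1/2 * ∑ k, (D ((0:ℝ), Pi.single k 1) S (τ, x))^2) + -(V x)
            + -(hbar^2/8 * ((∑ k, (D ((0:ℝ), Pi.single k 1) μ (τ, x))^2) / (μ (τ, x))^2))
            + hbar^2/4 * ((∑ k, D ((0:ℝ), Pi.single k 1)
                (D ((0:ℝ), Pi.single k 1) μ) (τ, x)) / μ (τ, x))))
          + hbar^2/4 * ∑ k, D ((0:ℝ), Pi.single k 1) (D ((0:ℝ), Pi.single k 1) μ) (τ, x)
      simp only [div_pow, ← Finset.sum_div]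
      field_simp
      ring
    linarith [splitA, splitB, peq]
  intro t t'
  rw [hE t, hE t', hconst t t']
end
end
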